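/- arXiv:gr-qc/0210062 — 6 statements merged into one kernel-verified Lean document; each statement's English description precedes it below -/
import Mathlib

section
/- Let M be an N×N real matrix, fix an index j with M_{jj} ≠ 0, and define V_j := 2/M_{jj}, V_i := 0 for i ≠ j, U_i := −M_{ij}V_j for all i. Fix an index i₀ ≠ j and set ρ := 2 − 2M_{i₀j}/M_{jj}. If ρ ≠ 1 and ρ(ρ−1) ≠ 2, then there exists a nonzero pair (ξ, η) ∈ ℝᴺ × ℝᴺ with η_{i₀} ≠ 0 satisfying the Kovalevski exponent equations (ρ − 2 − U_i)η_i = V_i ξ_i and (ρ − 1)ξ_i = Σ_{k=1}^N M_{ik} η_k for all i = 1,…,N; i.e. ρ = 2 − 2M_{i₀j}/M_{jj} is a Kovalevski Exponent (generalized Adler–van Moerbecke formula). -/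
/-- generalized Adler–van Moerbecke formula: in the case where
exactly one `Vⱼ` is nonzero (`Vⱼ = 2/Mⱼⱼ`, `Vᵢ = 0` for `i ≠ j`,
`Uᵢ = -MᵢⱼVⱼ`), for any `i₀ ≠ j` the number `ρ = 2 - 2Mᵢ₀ⱼ/Mⱼⱼ` is a
Kovalevski Exponent provided `ρ ≠ 1` and `ρ(ρ-1) ≠ 2`: there is a nonzero pair
`(ξ, η)` with `ηᵢ₀ ≠ 0` solving `(ρ - 2 - Uᵢ)ηᵢ = Vᵢξᵢ`,
`(ρ - 1)ξᵢ = Σₖ Mᵢₖηₖ`. -/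
theorem adler_van_moerbecke_formula
    {N : ℕ} (M : Matrix (Fin N) (Fin N) ℝ) (j : Fin N) (hj : M j j ≠ 0)
    (U V : Fin N → ℝ)
    (hV : V = fun i => if i = j then 2 / M j j else 0)
    (hU : U = fun i => -(M i j * (2 / M j j)))
    (i₀ : Fin N) (hi₀ : i₀ ≠ j)
    (ρ : ℝ) (hρ : ρ = 2 - 2 * M i₀ j / M j j)
    (hρ1 : ρ ≠ 1) (hρ2 : ρ * (ρ - 1) ≠ 2) :
    ∃ ξ η : Fin N → ℝ, ¬(ξ = 0 ∧ η = 0) ∧ η i₀ ≠ 0 ∧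
      ∀ i : Fin N,
        (ρ - 2 - U i) * η i = V i * ξ i
        ∧ (ρ - 1) * ξ i = ∑ k : Fin N, M i k * η k := by
  have hρ1' : ρ - 1 ≠ 0 := sub_ne_zero.mpr hρ1
  have hρ2' : ρ * (ρ - 1) - 2 ≠ 0 := sub_ne_zero.mpr hρ2
  set c : ℝ := 2 * M j i₀ / (M j j * (ρ * (ρ - 1) - 2)) with hc
  refine ⟨fun i => (M i i₀ + M i j * c) / (ρ - 1),
    fun k => (if k = i₀ then (1:ℝ) else 0) + (if k = j then c else 0), ?_, ?_, ?_⟩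
  · rintro ⟨-, hη⟩
    have := congrFun hη i₀
    simp [hi₀] at this
  · simp [hi₀]
  · intro i
    have hsum : ∑ k : Fin N, M i k * ((if k = i₀ then (1:ℝ) else 0) + (if k = j then c else 0))
        = M i i₀ + M i j * c := by
      simp [mul_add, mul_ite, Finset.sum_add_distrib, Finset.sum_ite_eq']
    constructor
    · by_cases hij : i = j
      · subst hij
        simp only [hV, hU, if_pos rfl, Ne.symm hi₀, if_neg (Ne.symm hi₀), if_true, if_false]
        rw [hc]
        field_simp
        ring
      · by_cases hii : i = i₀
        · subst hii
          simp only [hV, hU, if_neg hij, if_pos rfl, if_neg hij, zero_mul]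
          rw [hρ]
          field_simp
          ring
        · simp [hV, hU, hij, hii]
    · rw [hsum]
      field_simp
end

section
/- Let n₁, n₂ ∈ ℝ be nonzero and set n₃ = 0 (Bianchi types VI₀ and VII₀). Let M be the 6×6 Cartan matrix M_{ij} = −c_j⟨a_i,a_j⟩ of the vacuum Bianchi class A models with ⟨x,y⟩ = −x₁y₁+x₂y₂+x₃y₃, a₁=(4,−8,0), a₂=(4,4,4√3), a₃=(4,4,−4√3), a₄=(4,4,0), a₅=(4,−2,2√3), a₆=(4,−2,−2√3), c=(n₁², n₂², n₃², −2n₁n₂, −2n₂n₃, −2n₁n₃). Then for a pair i < j the 2×2 block matrix M̂_{ij} = [[M_{ii}, M_{ij}],[M_{ji}, M_{jj}]] is nondegenerate (M_{ii}M_{jj} − M_{ij}M_{ji} ≠ 0) if and only if (i,j) = (1,4). -/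
/-- The Lorentzian scalar product `⟨x,y⟩ = -x₁y₁ + x₂y₂ + x₃y₃` on `ℝ³`. -/
noncomputable def lorentzProd (x y : Fin 3 → ℝ) : ℝ :=
  -(x 0 * y 0) + x 1 * y 1 + x 2 * y 2

/-- The six vectors `a₁,…,a₆` of the vacuum Bianchi class A Toda lattice. -/
noncomputable def bianchiVec : Fin 6 → Fin 3 → ℝ :=
  ![![4, -8, 0],
    ![4, 4, 4 * Real.sqrt 3],
    ![4, 4, -4 * Real.sqrt 3],
    ![4, 4, 0],
    ![4, -2, 2 * Real.sqrt 3],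
    ![4, -2, -2 * Real.sqrt 3]]

/-- The coefficients `c = (n₁², n₂², n₃², -2n₁n₂, -2n₂n₃, -2n₁n₃)`. -/
noncomputable def bianchiCoef (n₁ n₂ n₃ : ℝ) : Fin 6 → ℝ :=
  ![n₁ ^ 2, n₂ ^ 2, n₃ ^ 2, -2 * n₁ * n₂, -2 * n₂ * n₃, -2 * n₁ * n₃]

/-- The Cartan matrix `Mᵢⱼ = -cⱼ⟨aᵢ,aⱼ⟩` of the vacuum Bianchi class A models. -/
noncomputable def bianchiCartan (n₁ n₂ n₃ : ℝ) : Matrix (Fin 6) (Fin 6) ℝ :=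
  fun i j => -(bianchiCoef n₁ n₂ n₃ j) * lorentzProd (bianchiVec i) (bianchiVec j)

/-- For Bianchi types VI₀ and VII₀ (`n₁ ≠ 0`, `n₂ ≠ 0`,
`n₃ = 0`), the 2×2 block matrix `M̂ᵢⱼ` with `i < j` is nondegenerate iff
`(i,j)` is the (1-based) pair `(1,4)`, i.e. `(0,3)` in `Fin 6`. -/
theorem bianchi_VI0_VII0_nondegenerate_blocks
    (n₁ n₂ : ℝ) (h₁ : n₁ ≠ 0) (h₂ : n₂ ≠ 0) :
    ∀ i j : Fin 6, i < j →
      (bianchiCartan n₁ n₂ 0 i i * bianchiCartan n₁ n₂ 0 j j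
          - bianchiCartan n₁ n₂ 0 i j * bianchiCartan n₁ n₂ 0 j i ≠ 0
        ↔ (i = 0 ∧ j = 3)) := by
  have hs : Real.sqrt 3 ^ 2 = 3 := Real.sq_sqrt (by norm_num)
  intro i j hij
  fin_cases i <;> fin_cases j <;>
    first
    | exact absurd hij (by decide)
    | -- pairs with j ∈ {2,4,5} : the coefficient c_j vanishes
      (refine iff_of_false (fun h => h ?_) (by decide)
       first
       | (show _ * (-((0:ℝ)^2) * _) - -((0:ℝ)^2) * _ * _ = 0; ring)
       | (show _ * (-(-2*n₂*(0:ℝ)) * _) - -(-2*n₂*(0:ℝ)) * _ * _ = 0; ring)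
       | (show _ * (-(-2*n₁*(0:ℝ)) * _) - -(-2*n₁*(0:ℝ)) * _ * _ = 0; ring))
    | -- (1,3) and (2,3): the Lorentz products ⟨a_j,a_j⟩ and ⟨a_i,a_j⟩ vanish
      (refine iff_of_false (fun h => h ?_) (by decide)
       first
       | (show _ * (-(-2*n₁*n₂) * (-(4*4) + 4*4 + 0*0))
             - -(-2*n₁*n₂) * (-(4*4) + 4*4 + 4*Real.sqrt 3 * 0) * _ = 0; ring)
       | (show _ * (-(-2*n₁*n₂) * (-(4*4) + 4*4 + 0*0))
             - -(-2*n₁*n₂) * (-(4*4) + 4*4 + -4*Real.sqrt 3 * 0) * _ = 0; ring))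
    | -- (0,1): vanishes thanks to (√3)² = 3
      (refine iff_of_false (fun h => h ?_) (by decide)
       show -n₁^2 * (-(4*4) + -8*-8 + 0*0)
             * (-n₂^2 * (-(4*4) + 4*4 + 4*Real.sqrt 3 * (4*Real.sqrt 3)))
           - -n₂^2 * (-(4*4) + -8*4 + 0*(4*Real.sqrt 3))
             * (-n₁^2 * (-(4*4) + 4*-8 + 4*Real.sqrt 3 * 0)) = 0
       linear_combination (768 * n₁^2 * n₂^2) * hs)
    | -- (0,3): the nondegenerate block, determinant 4608 n₁³ n₂ ≠ 0
      (refine iff_of_true ?_ (by decide)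
       show -n₁^2 * (-(4*4) + -8*-8 + 0*0) * (-(-2*n₁*n₂) * (-(4*4) + 4*4 + 0*0))
           - -(-2*n₁*n₂) * (-(4*4) + -8*4 + 0*0) * (-n₁^2 * (-(4*4) + 4*-8 + 0*0)) ≠ 0
       intro h
       have h' : n₁^3 * n₂ = 0 := by linear_combination h / 4608
       rcases mul_eq_zero.1 h' with h' | h'
       · exact h₁ (pow_eq_zero_iff (by norm_num)|>.1 h')
       · exact h₂ h')
end

section
/- Let n₁, n₂, n₃ ∈ ℝ all be nonzero (Bianchi types VIII and IX, the mixmaster models). Let M be the 6×6 Cartan matrix M_{ij} = −c_j⟨a_i,a_j⟩ of the vacuum Bianchi class A models with ⟨x,y⟩ = −x₁y₁+x₂y₂+x₃y₃, a₁=(4,−8,0), a₂=(4,4,4√3), a₃=(4,4,−4√3), a₄=(4,4,0), a₅=(4,−2,2√3), a₆=(4,−2,−2√3), c=(n₁², n₂², n₃², −2n₁n₂, −2n₂n₃, −2n₁n₃). Then for a pair i < j the 2×2 block matrix M̂_{ij} = [[M_{ii}, M_{ij}],[M_{ji}, M_{jj}]] is nondegenerate (M_{ii}M_{jj} − M_{ij}M_{ji}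 ≠ 0) if and only if (i,j) is one of the six pairs (1,4), (2,6), (3,5), (4,5), (4,6), (5,6). -/
/-! The minor factors as `det M̂ᵢⱼ = cᵢ cⱼ (⟨aᵢ,aᵢ⟩⟨aⱼ,aⱼ⟩ - ⟨aᵢ,aⱼ⟩²)`, and every `cᵢ` is nonzero
for the mixmaster models, so only the Gram matrix of the `aᵢ` matters. It is an integer matrix:
`a₁, a₂, a₃` have square norm `48` and pairwise products `-48`, so no pair among them contributes;
`a₄, a₅, a₆` are null with pairwise products `-24`, so every pair among them contributes; and a mixed
pair contributes exactly when the two vectors are not orthogonal. -/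

theorem lorentzProd_comm (x y : Fin 3 → ℝ) : lorentzProd x y = lorentzProd y x := by
  unfold lorentzProd
  ring

theorem bianchiCartan_minor (n₁ n₂ n₃ : ℝ) (i j : Fin 6) :
    bianchiCartan n₁ n₂ n₃ i i * bianchiCartan n₁ n₂ n₃ j j
        - bianchiCartan n₁ n₂ n₃ i j * bianchiCartan n₁ n₂ n₃ j i
      = bianchiCoef n₁ n₂ n₃ i * bianchiCoef n₁ n₂ n₃ j
        * (lorentzProd (bianchiVec i) (bianchiVec i) * lorentzProd (bianchiVec j) (bianchiVec j)
          - lorentzProd (bianchiVec i) (bianchiVec j) ^ 2) := by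
  simp only [bianchiCartan]
  rw [lorentzProd_comm (bianchiVec j) (bianchiVec i)]
  ring

theorem bianchiCoef_ne_zero {n₁ n₂ n₃ : ℝ} (h₁ : n₁ ≠ 0) (h₂ : n₂ ≠ 0) (h₃ : n₃ ≠ 0)
    (i : Fin 6) : bianchiCoef n₁ n₂ n₃ i ≠ 0 := by
  fin_cases i <;> simp [bianchiCoef, h₁, h₂, h₃]

def bianchiGram : Matrix (Fin 6) (Fin 6) ℤ :=
  !![ 48, -48, -48, -48,   0,   0;
     -48,  48, -48,   0,   0, -48;
     -48, -48,  48,   0, -48,   0;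
     -48,   0,   0,   0, -24, -24;
       0,   0, -48, -24,   0, -24;
       0, -48,   0, -24, -24,   0]

theorem lorentzProd_bianchiVec (i j : Fin 6) :
    lorentzProd (bianchiVec i) (bianchiVec j) = bianchiGram i j := by
  have hs : Real.sqrt 3 ^ 2 = 3 := Real.sq_sqrt (by norm_num)
  fin_cases i <;> fin_cases j <;>
    simp [lorentzProd, bianchiVec, bianchiGram] <;> ring_nf <;> norm_num [hs]

theorem bianchiGram_minor_ne_zero_iff (i j : Fin 6) (hij : i < j) :
    bianchiGram i i * bianchiGram j j - bianchiGram i j ^ 2 ≠ 0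
      ↔ ((i = 0 ∧ j = 3) ∨ (i = 1 ∧ j = 5) ∨ (i = 2 ∧ j = 4)
          ∨ (i = 3 ∧ j = 4) ∨ (i = 3 ∧ j = 5) ∨ (i = 4 ∧ j = 5)) := by
  revert i j
  decide

-- Indices are 0-based: the paper's pairs `(1,4), (2,6), (3,5), (4,5), (4,6), (5,6)` appear shifted by one.
/-- For the mixmaster models (Bianchi VIII and IX, all `nᵢ`
nonzero), the 2×2 block matrix `M̂ᵢⱼ` with `i < j` is nondegenerate iff
`(i,j)` is one of the six (1-based) pairs `(1,4), (2,6), (3,5), (4,5), (4,6),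
(5,6)`, i.e. `(0,3), (1,5), (2,4), (3,4), (3,5), (4,5)` in `Fin 6`. -/
theorem bianchi_VIII_IX_nondegenerate_blocks
    (n₁ n₂ n₃ : ℝ) (h₁ : n₁ ≠ 0) (h₂ : n₂ ≠ 0) (h₃ : n₃ ≠ 0) :
    ∀ i j : Fin 6, i < j →
      (bianchiCartan n₁ n₂ n₃ i i * bianchiCartan n₁ n₂ n₃ j j
          - bianchiCartan n₁ n₂ n₃ i j * bianchiCartan n₁ n₂ n₃ j i ≠ 0
        ↔ ((i = 0 ∧ j = 3) ∨ (i = 1 ∧ j = 5) ∨ (i = 2 ∧ j = 4)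
            ∨ (i = 3 ∧ j = 4) ∨ (i = 3 ∧ j = 5) ∨ (i = 4 ∧ j = 5))) := by
  intro i j hij
  rw [bianchiCartan_minor, mul_ne_zero_iff, mul_ne_zero_iff, ← bianchiGram_minor_ne_zero_iff i j hij]
  simp only [lorentzProd_bianchiVec, bianchiCoef_ne_zero h₁ h₂ h₃, ne_eq, not_false_eq_true, true_and]
  exact_mod_cast Iff.rfl
end

section
/- Let ⟨x,y⟩ := −x₁y₁ + x₂y₂ + x₃y₃ on ℝ³, let a₁=(4,−8,0), a₂=(4,4,4√3), a₃=(4,4,−4√3), a₄=(4,4,0), a₅=(4,−2,2√3), a₆=(4,−2,−2√3), and let a₇ := (6,0,0) be the additional vector arising from the cosmological constant term Λexp(6α). Then 2 − 2⟨a_i,a₇⟩/⟨a₇,a₇⟩ = 2/3 for every i = 1,…,6, and 2 − 2⟨a₇,a_i⟩/⟨a_i,a_i⟩ = 3 for i = 1,2,3. Hence the cosmological constant term contributes the non-integer Kovalevski Exponent 2/3. -/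
/-- The extra vector `a₇ = (6,0,0)` arising from the cosmological constant
term `Λ exp(6α)`. -/
noncomputable def aLambda : Fin 3 → ℝ := ![6, 0, 0]

/-- For the cosmological-constant vector `a₇ = (6,0,0)` one has
`2 - 2⟨aᵢ,a₇⟩/⟨a₇,a₇⟩ = 2/3` for all `i = 1,…,6` and
`2 - 2⟨a₇,aᵢ⟩/⟨aᵢ,aᵢ⟩ = 3` for `i = 1,2,3`; hence the cosmological constant
contributes the non-integer Kovalevski Exponent `2/3`. -/
theorem cosmological_constant_exponents :
    (∀ i : Fin 6,
      2 - 2 * lorentzProd (bianchiVec i) aLambda / lorentzProd aLambda aLambda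
        = 2 / 3) ∧
    (∀ i : Fin 6, (i = 0 ∨ i = 1 ∨ i = 2) →
      2 - 2 * lorentzProd aLambda (bianchiVec i)
          / lorentzProd (bianchiVec i) (bianchiVec i) = 3) ∧
    ¬∃ m : ℤ, (2 / 3 : ℝ) = (m : ℝ) := by
  have h3 : Real.sqrt 3 * Real.sqrt 3 = 3 := Real.mul_self_sqrt (by norm_num)
  refine ⟨?_, ?_, ?_⟩
  · intro i
    fin_cases i <;>
      norm_num [lorentzProd, bianchiVec, aLambda, Matrix.cons_val_one, Matrix.head_cons,
        Matrix.cons_val_two, Matrix.tail_cons]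
  · intro i hi
    rcases hi with h | h | h <;> subst h
    · show 2 - 2 * lorentzProd ![6,0,0] ![4,-8,0] / lorentzProd ![4,-8,0] ![4,-8,0] = 3
      simp only [lorentzProd, Matrix.cons_val_zero, Matrix.cons_val_one, Matrix.head_cons,
        Matrix.cons_val_two, Matrix.tail_cons]
      norm_num
    · show 2 - 2 * lorentzProd ![6,0,0] ![4,4,4*Real.sqrt 3] /
          lorentzProd ![4,4,4*Real.sqrt 3] ![4,4,4*Real.sqrt 3] = 3
      simp only [lorentzProd, Matrix.cons_val_zero, Matrix.cons_val_one, Matrix.head_cons,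
        Matrix.cons_val_two, Matrix.tail_cons]
      rw [show 4*Real.sqrt 3*(4*Real.sqrt 3) = 48 by nlinarith [h3]]
      norm_num
    · show 2 - 2 * lorentzProd ![6,0,0] ![4,4,-4*Real.sqrt 3] /
          lorentzProd ![4,4,-4*Real.sqrt 3] ![4,4,-4*Real.sqrt 3] = 3
      simp only [lorentzProd, Matrix.cons_val_zero, Matrix.cons_val_one, Matrix.head_cons,
        Matrix.cons_val_two, Matrix.tail_cons]
      rw [show -4*Real.sqrt 3*(-4*Real.sqrt 3) = 48 by nlinarith [h3]]
      norm_num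
  · rintro ⟨m, hm⟩
    have h : (2 : ℝ) = m * 3 := by field_simp at hm; linarith
    have h2 : (2 : ℤ) = m * 3 := by exact_mod_cast h
    omega
end

section
/- Let ⟨x,y⟩ := −x₁y₁ + x₂y₂ + x₃y₃ on ℝ³, let a₁=(4,−8,0), a₂=(4,4,4√3), a₃=(4,4,−4√3), and let a₇ := (3,0,0) be the additional vector arising from the dust term μexp(3α). Then 2 − 2⟨a₇,a_i⟩/⟨a_i,a_i⟩ = 5/2 for i = 1,2,3. Moreover, both numbers z = −1/20 + √591/60 and z = −1/20 − √591/60 are irrational, and consequently no ρ ∈ ℚ satisfies ρ(ρ − 1) = z for either value; hence irrational or complex Kovalevski Exponents exist in the dust-filled Bianchi class A models, irrespective of the value of μ or the Bianchi type. -/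
/-- The extra vector `a₇ = (3,0,0)` arising from the dust term `μ exp(3α)`. -/
noncomputable def aDust : Fin 3 → ℝ := ![3, 0, 0]

lemma irr591 : Irrational (Real.sqrt 591) := by
  rw [show (591 : ℝ) = ((591 : ℕ) : ℝ) by norm_num, irrational_sqrt_natCast_iff]
  rintro ⟨m, hm⟩
  rcases le_or_gt m 24 with h | h
  · interval_cases m <;> omega
  · nlinarith

/-- For the dust vector `a₇ = (3,0,0)` one has
`2 - 2⟨a₇,aᵢ⟩/⟨aᵢ,aᵢ⟩ = 5/2` for `i = 1,2,3`; moreover both numbers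
`z = -1/20 ± √591/60` are irrational and no rational `ρ` satisfies
`ρ(ρ-1) = z` for either value: irrational or complex Kovalevski Exponents
exist in the dust-filled Bianchi class A models, irrespective of `μ` or the
Bianchi type. -/
theorem dust_exponents :
    (∀ i : Fin 6, (i = 0 ∨ i = 1 ∨ i = 2) →
      2 - 2 * lorentzProd aDust (bianchiVec i)
          / lorentzProd (bianchiVec i) (bianchiVec i) = 5 / 2) ∧
    Irrational (-1 / 20 + Real.sqrt 591 / 60) ∧
    Irrational (-1 / 20 - Real.sqrt 591 / 60) ∧
    (∀ z : ℝ,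
      (z = -1 / 20 + Real.sqrt 591 / 60 ∨ z = -1 / 20 - Real.sqrt 591 / 60) →
      ∀ ρ : ℚ, (ρ : ℝ) * ((ρ : ℝ) - 1) ≠ z) := by
  have h3 : Real.sqrt 3 * Real.sqrt 3 = 3 := Real.mul_self_sqrt (by norm_num)
  have hplus : Irrational (-1 / 20 + Real.sqrt 591 / 60) := by
    have := (Irrational.ratCast_add (-1/20) (irr591.div_intCast (by norm_num : (60:ℤ) ≠ 0)))
    simpa [div_eq_mul_inv] using this
  have hminus : Irrational (-1 / 20 - Real.sqrt 591 / 60) := by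
    have := (Irrational.ratCast_add (-1/20) ((irr591.neg).div_intCast (by norm_num : (60:ℤ) ≠ 0)))
    have h : ((-1/20 : ℚ) : ℝ) + (-Real.sqrt 591) / ((60:ℤ):ℝ) = -1 / 20 - Real.sqrt 591 / 60 := by
      push_cast; ring
    rwa [h] at this
  refine ⟨?_, hplus, hminus, ?_⟩
  · have key : ∀ a b : ℝ, a * Real.sqrt 3 * (b * Real.sqrt 3) = a * b * 3 :=
      fun a b => by rw [mul_mul_mul_comm, h3]
    rintro i (rfl | rfl | rfl) <;>
      simp only [lorentzProd, aDust, bianchiVec, Matrix.cons_val_zero,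
        Matrix.cons_val_one, Matrix.head_cons, Matrix.cons_val_two,
        Matrix.tail_cons, Matrix.cons_val_fin_one, Matrix.head_fin_const] <;>
      norm_num [key]
  · rintro z (rfl | rfl) ρ h
    · exact hplus ⟨ρ * (ρ - 1), by push_cast; linarith [h]⟩
    · exact hminus ⟨ρ * (ρ - 1), by push_cast; linarith [h]⟩
end

section
/- Every real root z of the quadratic equation 363z² − 22z − 52/3 = 0 is irrational, and every real root z of the quadratic equation z² − 4z − 1/192 = 0 is irrational. Consequently, for any such root z there is no ρ ∈ ℚ with ρ(ρ − 1) = z; hence the Kovalevski Exponents arising in Bianchi class A models with radiative matter are irrational or complex, irrespective of the value of Γ_rad or the Bianchi type concerned. -/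
lemma ns6413 : ¬ IsSquare (6413 : ℕ) := by
  rintro ⟨r, hr⟩
  rcases le_or_gt r 80 with h | h
  · nlinarith
  · nlinarith

lemma ns147648 : ¬ IsSquare (147648 : ℕ) := by
  rintro ⟨r, hr⟩
  rcases le_or_gt r 384 with h | h
  · nlinarith
  · nlinarith

lemma no_rat_sq (n : ℕ) (h : ¬ IsSquare n) (r : ℚ) : r ^ 2 ≠ (n : ℚ) := by
  intro he
  have hirr : Irrational (Real.sqrt n) := irrational_sqrt_natCast_iff.mpr h
  have : Real.sqrt n = ((|r| : ℚ) : ℝ) := by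
    have : ((n : ℚ) : ℝ) = ((r : ℝ)) ^ 2 := by exact_mod_cast he.symm
    rw [show ((n : ℝ)) = ((n : ℚ) : ℝ) by push_cast; ring, this,
      Real.sqrt_sq_eq_abs]
    push_cast
    ring
  exact (this ▸ hirr) ⟨|r|, rfl⟩

/-- Every real root of `363z² - 22z - 52/3 = 0` is irrational,
and every real root of `z² - 4z - 1/192 = 0` is irrational; consequently for
any such root `z` no rational `ρ` satisfies `ρ(ρ-1) = z`. Hence the Kovalevski
Exponents arising in Bianchi class A models with radiative matter are
irrational or complex, irrespective of `Γ_rad` or the Bianchi type. -/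
theorem radiation_irrational_exponents :
    (∀ z : ℝ, 363 * z ^ 2 - 22 * z - 52 / 3 = 0 → Irrational z) ∧
    (∀ z : ℝ, z ^ 2 - 4 * z - 1 / 192 = 0 → Irrational z) ∧
    (∀ z : ℝ,
      (363 * z ^ 2 - 22 * z - 52 / 3 = 0 ∨ z ^ 2 - 4 * z - 1 / 192 = 0) →
      ∀ ρ : ℚ, (ρ : ℝ) * ((ρ : ℝ) - 1) ≠ z) := by
  have h1 : ∀ z : ℝ, 363 * z ^ 2 - 22 * z - 52 / 3 = 0 → Irrational z := by
    intro z hz hmem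
    obtain ⟨q, rfl⟩ := hmem
    have h2 : ((363 * q - 11 : ℚ) : ℝ) ^ 2 = ((6413 : ℚ) : ℝ) := by
      push_cast
      nlinarith [hz]
    exact no_rat_sq 6413 ns6413 (363 * q - 11) (by exact_mod_cast h2)
  have h2 : ∀ z : ℝ, z ^ 2 - 4 * z - 1 / 192 = 0 → Irrational z := by
    intro z hz hmem
    obtain ⟨q, rfl⟩ := hmem
    have h3 : ((192 * q - 384 : ℚ) : ℝ) ^ 2 = ((147648 : ℚ) : ℝ) := by
      push_cast
      nlinarith [hz]
    exact no_rat_sq 147648 ns147648 (192 * q - 384) (by exact_mod_cast h3)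
  refine ⟨h1, h2, ?_⟩
  intro z hz ρ hρ
  have hirr : Irrational z := hz.elim (h1 z) (h2 z)
  exact hirr ⟨ρ * (ρ - 1), by push_cast; linarith [hρ]⟩
end
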